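/- arXiv:2301.11399 — 2 statements merged into one kernel-verified Lean document; each statement's English description precedes it below -/
import Mathlib

section
/- Let q be a positive integer, let β₀, β₁, …, β_q : [0,1] → ℝ, let h : ℝ → ℝ, and let q_x : [0,1] → ℝ. Assume: (1) β₀ is non-decreasing on [0,1]; (2) for every subset S ⊆ {1,…,q}, the function p ↦ β₀(p) + Σ_{j ∈ S} β_j(p) is non-decreasing on [0,1]; (3) h is non-decreasing on ℝ; and (4) q_x is non-decreasing on [0,1]. Then for any scalars z₁, …, z_q ∈ [0,1], the function p ↦ β₀(p) + Σ_{j=1}^{q} z_j β_j(p) + h(q_x(p)) is non-decreasing on [0,1]. -/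
lemma dorqf_aux {n : ℕ} (a : Fin n → ℝ) (z : Fin n → ℝ)
    (hz : ∀ j, z j ∈ Set.Icc (0:ℝ) 1) :
    ∀ (T : Finset (Fin n)) (c : ℝ),
      (∀ S ⊆ T, 0 ≤ c + ∑ j ∈ S, a j) → 0 ≤ c + ∑ j ∈ T, z j * a j := by
  intro T
  induction T using Finset.induction_on with
  | empty =>
      intro c hc
      simpa using hc ∅ (by simp)
  | insert _ _ hi ih =>
      rename_i i T'
      intro c hc
      have h1 : 0 ≤ c + ∑ j ∈ T', z j * a j :=
        ih c (fun S hS => hc S (hS.trans (Finset.subset_insert _ _)))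
      have h2 : 0 ≤ (c + a i) + ∑ j ∈ T', z j * a j := by
        have := ih (c + a i) (fun S hS => by
          have := hc (insert i S) (Finset.insert_subset_insert _ hS)
          rwa [Finset.sum_insert (fun hmem => hi (hS hmem)), ← add_assoc] at this)
        linarith
      have hz0 := (hz i).1
      have hz1 := (hz i).2
      rw [Finset.sum_insert hi]
      nlinarith [mul_nonneg hz0 (by linarith : (0:ℝ) ≤ (c + a i) + ∑ j ∈ T', z j * a j),
        mul_nonneg (by linarith : (0:ℝ) ≤ 1 - z i) h1]

/-- Theorem 1 (DORQF): joint monotonicity conditions on the functional coefficients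
imply that the predicted quantile function is non-decreasing. -/
theorem dorqf_monotone
    (q : ℕ) (hq : 0 < q)
    (β₀ : ℝ → ℝ) (β : Fin q → ℝ → ℝ) (h : ℝ → ℝ) (qx : ℝ → ℝ)
    (h1 : MonotoneOn β₀ (Set.Icc (0:ℝ) 1))
    (h2 : ∀ S : Finset (Fin q),
      MonotoneOn (fun p => β₀ p + ∑ j ∈ S, β j p) (Set.Icc (0:ℝ) 1))
    (h3 : Monotone h)
    (h4 : MonotoneOn qx (Set.Icc (0:ℝ) 1))
    (z : Fin q → ℝ) (hz : ∀ j, z j ∈ Set.Icc (0:ℝ) 1) :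
    MonotoneOn (fun p => β₀ p + ∑ j, z j * β j p + h (qx p)) (Set.Icc (0:ℝ) 1) := by
  intro x hx y hy hxy
  have hmain : 0 ≤ (β₀ y - β₀ x) + ∑ j, z j * (β j y - β j x) := by
    apply dorqf_aux (fun j => β j y - β j x) z hz Finset.univ
    intro S _
    have := h2 S hx hy hxy
    simp only at this
    have : ∑ j ∈ S, (β j y - β j x) = (∑ j ∈ S, β j y) - ∑ j ∈ S, β j x :=
      Finset.sum_sub_distrib _ _
    linarith [h2 S hx hy hxy, this.ge, this.le,
      Finset.sum_sub_distrib (s := S) (f := fun j => β j y) (g := fun j => β j x)]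
  have hh : h (qx x) ≤ h (qx y) := h3 (h4 hx hy hxy)
  have hsum : ∑ j, z j * (β j y - β j x)
      = (∑ j, z j * β j y) - ∑ j, z j * β j x := by
    rw [← Finset.sum_sub_distrib]; congr 1; ext j; ring
  simp only
  linarith [hmain, hsum.le, hsum.ge]
end

section
/- Let q be a positive integer and let β₀, β₁, …, β_q : [0,1] → ℝ. Assume: (1) β₀ is non-decreasing on [0,1]; and (2) for every subset S ⊆ {1,…,q}, the function p ↦ β₀(p) + Σ_{j ∈ S} β_j(p) is non-decreasing on [0,1]. Then for any scalars z₁, …, z_q ∈ [0,1], the function p ↦ β₀(p) + Σ_{j=1}^{q} z_j β_j(p) is non-decreasing on [0,1]. In particular, the conclusion holds without requiring any individual slope function β_j (for j ≥ 1) to be non-decreasing. -/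
/-!
For fixed `a ≤ b`, the increment of `β₀ + ∑ j, z j • β j` from `a` to `b` is affine in `z`,
so over the cube `[0, 1]^q` it is smallest at a vertex, the indicator of some `S`; there it
is the increment of `β₀ + ∑ j ∈ S, β j`, which is nonnegative.
-/

open Finset

theorem Finset.exists_sum_le_sum_mul_of_mem_Icc {ι R : Type*} [Fintype ι] [Ring R]
    [LinearOrder R] [IsStrictOrderedRing R] (d z : ι → R) (hz : ∀ j, z j ∈ Set.Icc (0 : R) 1) :
    ∃ S : Finset ι, ∑ j ∈ S, d j ≤ ∑ j, z j * d j := by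
  refine ⟨univ.filter (fun j => d j < 0), ?_⟩
  rw [sum_filter]
  refine sum_le_sum fun j _ => ?_
  obtain ⟨hz0, hz1⟩ := hz j
  split_ifs with hd
  · simpa using mul_le_mul_of_nonpos_right hz1 hd.le
  · exact mul_nonneg hz0 (not_lt.mp hd)

theorem qfosr_monotone_general
    (q : ℕ)
    (β₀ : ℝ → ℝ) (β : Fin q → ℝ → ℝ)
    (h2 : ∀ S : Finset (Fin q),
      MonotoneOn (fun p => β₀ p + ∑ j ∈ S, β j p) (Set.Icc (0:ℝ) 1))
    (z : Fin q → ℝ) (hz : ∀ j, z j ∈ Set.Icc (0:ℝ) 1) :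
    MonotoneOn (fun p => β₀ p + ∑ j, z j * β j p) (Set.Icc (0:ℝ) 1) := by
  intro a ha b hb hab
  obtain ⟨S, hS⟩ := exists_sum_le_sum_mul_of_mem_Icc (fun j => β j b - β j a) z hz
  have hmono : β₀ a + ∑ j ∈ S, β j a ≤ β₀ b + ∑ j ∈ S, β j b := h2 S ha hb hab
  simp only [mul_sub, sum_sub_distrib] at hS
  linarith

/-- QFOSR submodel: subset-sum monotonicity of the functional coefficients implies
the predicted quantile function is non-decreasing, without requiring any individual
slope function to be non-decreasing. -/
theorem qfosr_monotone
    (q : ℕ) (hq : 0 < q)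
    (β₀ : ℝ → ℝ) (β : Fin q → ℝ → ℝ)
    (h1 : MonotoneOn β₀ (Set.Icc (0:ℝ) 1))
    (h2 : ∀ S : Finset (Fin q),
      MonotoneOn (fun p => β₀ p + ∑ j ∈ S, β j p) (Set.Icc (0:ℝ) 1))
    (z : Fin q → ℝ) (hz : ∀ j, z j ∈ Set.Icc (0:ℝ) 1) :
    MonotoneOn (fun p => β₀ p + ∑ j, z j * β j p) (Set.Icc (0:ℝ) 1) :=
  qfosr_monotone_general q β₀ β h2 z hz
end
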